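/- arXiv:2406.18463 — 3 statements merged into one kernel-verified Lean document; each statement's English description precedes it below -/
import Mathlib

section
/- Let ≿¹ and ≿² be preferences on acts represented by V^i(f) = E_μ[u∘f] − C^i(σ(f)) with the same u and μ, where u is surjective onto ℝ (unbounded) and each C^i is monotone with C^i(trivial algebra) = 0. Then the following are equivalent: (i) for every act f and every constant act x, V¹(x) > V¹(f) implies V²(x) > V²(f); (ii) C¹(A) ≤ C²(A) for every algebra A generated by some partition of Ω. -/
/-- The algebra on `Ω` generated by the level sets of an act `f : Ω → X`. -/
def sigmaAct {Ω X : Type*} (f : Ω → X) : MeasurableSpace Ω :=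
  MeasurableSpace.comap f ⊤

lemma sigmaAct_const {Ω X : Type*} (x : X) : sigmaAct (fun _ : Ω => x) = ⊥ := by
  apply le_antisymm _ bot_le
  rintro s ⟨t, -, rfl⟩
  rw [MeasurableSpace.measurableSet_bot_iff]
  by_cases hx : x ∈ t
  · right; ext ω; simp [hx]
  · left; ext ω; simp [hx]

/-- Comparison of degrees of complexity aversion: DM1 has a lower degree of
complexity aversion than DM2 iff `C¹ ≤ C²` on all algebras generated by acts. -/
theorem stmt3 {Ω X : Type*} [Fintype Ω] [Nonempty Ω]
    (μ : Ω → ℝ) (hμ : ∀ ω, 0 < μ ω) (hμ1 : ∑ ω, μ ω = 1)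
    (u : X → ℝ) (hu : Function.Surjective u)
    (C₁ C₂ : MeasurableSpace Ω → ℝ)
    (hm₁ : Monotone C₁) (hm₂ : Monotone C₂)
    (h0₁ : C₁ ⊥ = 0) (h0₂ : C₂ ⊥ = 0)
    (hn₁ : ∀ m, 0 ≤ C₁ m) (hn₂ : ∀ m, 0 ≤ C₂ m) :
    (∀ (f : Ω → X) (x : X),
        (∑ ω, u (f ω) * μ ω) - C₁ (sigmaAct f) <
          (∑ ω, u x * μ ω) - C₁ (sigmaAct (fun _ : Ω => x)) →
        (∑ ω, u (f ω) * μ ω) - C₂ (sigmaAct f) <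
          (∑ ω, u x * μ ω) - C₂ (sigmaAct (fun _ : Ω => x)))
      ↔ (∀ f : Ω → X, C₁ (sigmaAct f) ≤ C₂ (sigmaAct f)) := by
  have hconst : ∀ x : X, (∑ ω, u x * μ ω) = u x := by
    intro x
    rw [← Finset.mul_sum, hμ1, mul_one]
  constructor
  · intro h f
    by_contra hc
    push_neg at hc
    set E := ∑ ω, u (f ω) * μ ω with hE
    obtain ⟨x, hx⟩ := hu ((E - C₁ (sigmaAct f) + (E - C₂ (sigmaAct f))) / 2)
    have h1 : E - C₁ (sigmaAct f) < u x := by rw [hx]; linarith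
    have h2 : u x < E - C₂ (sigmaAct f) := by rw [hx]; linarith
    have := h f x (by rw [hconst, sigmaAct_const, h0₁]; linarith)
    rw [hconst, sigmaAct_const, h0₂] at this
    linarith
  · intro h f x hlt
    rw [hconst, sigmaAct_const, h0₁] at hlt
    rw [hconst, sigmaAct_const, h0₂]
    have := h f
    linarith
end

section
/- Dynamic Complexity Aversion holds for the Minimal Complexity Aversion representation: let E have μ(E) > 0, let f, g be acts, and let x be an outcome such that the pasted act gEx attains the minimum defining C_{E,μ}(σ(g)), i.e., C(σ(gEx)) = μ(E)·C_{E,μ}(σ(g)). If V(fEx) ≥ V(gEx) then V_E(f) ≥ V_E(g). -/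
/-- The algebra on `E` generated by the restriction of `f` to `E`. -/
def sigmaRest {Ω X : Type*} (f : Ω → X) (E : Set Ω) : MeasurableSpace E :=
  MeasurableSpace.comap (fun ω : E => f ω) ⊤

/-- The minimal conditional complexity cost. -/
noncomputable def condCost {Ω X : Type*} (C : MeasurableSpace Ω → ℝ) (μE : ℝ)
    (E : Set Ω) (f : Ω → X) : ℝ :=
  sInf {x : ℝ | ∃ h : Ω → X, sigmaRest h E = sigmaRest f E ∧ x = C (sigmaAct h) / μE}

/-- The pasted act `fEx`: equal to `f` on `E`, constantly `x` off `E`. -/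
def paste {Ω X : Type*} [DecidableEq Ω] (f : Ω → X) (E : Finset Ω) (x : X) : Ω → X :=
  fun ω => if ω ∈ E then f ω else x

/-- Dynamic Complexity Aversion holds for the Minimal Complexity Aversion
representation. -/
theorem stmt8 {Ω X : Type*} [Fintype Ω] [Nonempty Ω] [DecidableEq Ω]
    (μ : Ω → ℝ) (hμ0 : ∀ ω, 0 ≤ μ ω) (hμ1 : ∑ ω, μ ω = 1)
    (E : Finset Ω) (hμE : 0 < ∑ ω ∈ E, μ ω)
    (u : X → ℝ)
    (C : MeasurableSpace Ω → ℝ) (hCmono : Monotone C) (hC0 : C ⊥ = 0)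
    (hCnn : ∀ m, 0 ≤ C m)
    (f g : Ω → X) (x : X)
    -- `gEx` attains the minimum defining `C_{E,μ}(σ(g))`
    (hattain : C (sigmaAct (paste g E x)) =
      (∑ ω ∈ E, μ ω) * condCost C (∑ ω ∈ E, μ ω) (↑E) g)
    -- `V(fEx) ≥ V(gEx)`
    (hV : (∑ ω, u (paste g E x ω) * μ ω) - C (sigmaAct (paste g E x)) ≤
          (∑ ω, u (paste f E x ω) * μ ω) - C (sigmaAct (paste f E x))) :
    -- `V_E(f) ≥ V_E(g)`
    (∑ ω, u (g ω) * (if ω ∈ E then μ ω / (∑ ω' ∈ E, μ ω') else 0)) -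
        condCost C (∑ ω' ∈ E, μ ω') (↑E) g ≤
      (∑ ω, u (f ω) * (if ω ∈ E then μ ω / (∑ ω' ∈ E, μ ω') else 0)) -
        condCost C (∑ ω' ∈ E, μ ω') (↑E) f := by

  set m := ∑ ω ∈ E, μ ω with hm
  have hm0 : m ≠ 0 := ne_of_gt hμE
  have hrest : ∀ h : Ω → X, sigmaRest (paste h E x) (↑E) = sigmaRest h (↑E) := by
    intro h
    unfold sigmaRest
    congr 1
    funext ω
    have hω : (ω : Ω) ∈ E := ω.2
    simp [paste, hω]
  have hbdd : BddBelow {y : ℝ | ∃ h : Ω → X, sigmaRest h (↑E) = sigmaRest f (↑E) ∧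
      y = C (sigmaAct h) / m} := by
    refine ⟨0, ?_⟩
    rintro y ⟨h, -, rfl⟩
    exact div_nonneg (hCnn _) (le_of_lt hμE)
  have hle : condCost C m (↑E) f ≤ C (sigmaAct (paste f E x)) / m :=
    csInf_le hbdd ⟨paste f E x, hrest f, rfl⟩
  have hgeq : condCost C m (↑E) g = C (sigmaAct (paste g E x)) / m := by
    rw [hattain]; field_simp
  have hsum : ∀ h : Ω → X,
      (∑ ω, u (h ω) * (if ω ∈ E then μ ω / m else 0))
        = (∑ ω ∈ E, u (h ω) * μ ω) / m := by
    intro h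
    simp only [mul_ite, mul_zero]
    rw [Finset.sum_ite_mem, Finset.univ_inter, Finset.sum_div]
    exact Finset.sum_congr rfl fun ω _ => (mul_div_assoc _ _ _).symm
  have hps : ∀ h : Ω → X, (∑ ω, u (paste h E x ω) * μ ω)
      = (∑ ω ∈ E, u (h ω) * μ ω) + ∑ ω ∈ Finset.univ.filter (¬ · ∈ E), u x * μ ω := by
    intro h
    simp only [paste, apply_ite u, ite_mul]
    rw [Finset.sum_ite, Finset.filter_mem_eq_inter, Finset.univ_inter]
  rw [hps f, hps g] at hV
  rw [hsum f, hsum g, hgeq]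
  have key : (∑ ω ∈ E, u (g ω) * μ ω) - C (sigmaAct (paste g E x))
      ≤ (∑ ω ∈ E, u (f ω) * μ ω) - C (sigmaAct (paste f E x)) := by linarith
  have h2 : ((∑ ω ∈ E, u (g ω) * μ ω) - C (sigmaAct (paste g E x))) / m
      ≤ ((∑ ω ∈ E, u (f ω) * μ ω) - C (sigmaAct (paste f E x))) / m := by gcongr
  rw [sub_div, sub_div] at h2
  linarith
end

section
/- If two cost functions C and C' over algebras on a finite Ω both give Complexity Aversion representations of the same preference with common u (affine, range ℝ) and common full-support μ, then C = C'. (Uniqueness of the cost function given fixed utility and prior.) -/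
lemma exists_act {Ω X : Type*} [Fintype Ω] [Infinite X] (m : MeasurableSpace Ω) :
    ∃ f : Ω → X, sigmaAct f = m := by
  classical
  obtain ⟨ι0, hι0⟩ := Countable.exists_injective_nat (Set Ω)
  set ι : Set Ω → X := fun s => Infinite.natEmbedding X (ι0 s) with hιdef
  have hι : Function.Injective ι := (Infinite.natEmbedding X).injective.comp hι0
  set A : Ω → Set Ω :=
    fun ω => {ω' | ∀ s : Set Ω, @MeasurableSet Ω m s → (ω ∈ s ↔ ω' ∈ s)} with hAdef
  have hArefl : ∀ ω, ω ∈ A ω := fun ω s _ => Iff.rfl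
  have hAeq : ∀ ω ω', ω' ∈ A ω → A ω' = A ω := by
    intro ω ω' h
    ext z
    constructor
    · intro hz s hs
      exact (h s hs).trans (hz s hs)
    · intro hz s hs
      exact ((h s hs).symm).trans (hz s hs)
  have hAmeas : ∀ ω, @MeasurableSet Ω m (A ω) := by
    intro ω
    have : A ω = ⋂ s ∈ {s : Set Ω | @MeasurableSet Ω m s ∧ ω ∈ s}, s := by
      ext ω'
      simp only [Set.mem_iInter, Set.mem_setOf_eq, hAdef]
      constructor
      · intro h s ⟨hms, hωs⟩
        exact (h s hms).mp hωs
      · intro h s hms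
        constructor
        · intro hω
          exact h s ⟨hms, hω⟩
        · intro hω'
          by_contra hω
          exact h sᶜ ⟨hms.compl, hω⟩ hω'
    rw [this]
    exact MeasurableSet.biInter (Set.to_countable _)
      (fun s hs => hs.1)
  refine ⟨fun ω => ι (A ω), le_antisymm ?_ ?_⟩
  · rintro s ⟨S, -, rfl⟩
    have : (fun ω => ι (A ω)) ⁻¹' S = ⋃ (ω : Ω) (_ : ι (A ω) ∈ S), A ω := by
      ext x
      simp only [Set.mem_preimage, Set.mem_iUnion]
      constructor
      · intro hx
        exact ⟨x, hx, hArefl x⟩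
      · rintro ⟨ω, hω, hx⟩
        rwa [hAeq ω x hx]
    rw [this]
    exact MeasurableSet.iUnion fun ω => MeasurableSet.iUnion fun _ => hAmeas ω
  · intro s hs
    refine ⟨ι '' (A '' s), trivial, ?_⟩
    ext x
    simp only [Set.mem_preimage, Set.mem_image]
    constructor
    · rintro ⟨t, ⟨ω, hωs, rfl⟩, ht⟩
      have : A x = A ω := by
        have := hι ht
        rw [this]
      have hx : x ∈ A ω := this ▸ hArefl x
      exact ((hx s hs).mp hωs)
    · intro hx
      exact ⟨A x, ⟨x, hx, rfl⟩, rfl⟩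

/-- Uniqueness of the complexity cost function given fixed utility and prior. -/
theorem stmt13 {Ω X : Type*} [Fintype Ω] [Nonempty Ω] [AddCommGroup X] [Module ℝ X]
    (μ : Ω → ℝ) (hμ : ∀ ω, 0 < μ ω) (hμ1 : ∑ ω, μ ω = 1)
    (u : X → ℝ)
    (haff : ∀ (a b : X) (t : ℝ), u (t • a + (1 - t) • b) = t * u a + (1 - t) * u b)
    (hsurj : Function.Surjective u)
    (C C' : MeasurableSpace Ω → ℝ)
    (hCmono : Monotone C) (hC'mono : Monotone C')
    (hC0 : C ⊥ = 0) (hC'0 : C' ⊥ = 0)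
    (hCnn : ∀ m, 0 ≤ C m) (hC'nn : ∀ m, 0 ≤ C' m)
    (hrep : ∀ f g : Ω → X,
      ((∑ ω, u (g ω) * μ ω) - C (sigmaAct g) ≤ (∑ ω, u (f ω) * μ ω) - C (sigmaAct f)) ↔
      ((∑ ω, u (g ω) * μ ω) - C' (sigmaAct g) ≤ (∑ ω, u (f ω) * μ ω) - C' (sigmaAct f))) :
    ∀ m : MeasurableSpace Ω, C m = C' m := by
  have : Infinite X := Infinite.of_surjective u hsurj
  intro m
  obtain ⟨f, hf⟩ := exists_act (X := X) m
  set E : ℝ := ∑ ω, u (f ω) * μ ω with hE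
  -- constant act with utility value t
  have key : ∀ t : ℝ, (t ≤ E - C m ↔ t ≤ E - C' m) := by
    intro t
    obtain ⟨x, hx⟩ := hsurj t
    have h := hrep f (fun _ => x)
    rw [sigmaAct_const, hf, hC0, hC'0] at h
    have hsum : (∑ ω, u x * μ ω) = t := by
      rw [← Finset.mul_sum, hμ1, mul_one, hx]
    rw [hsum] at h
    simpa using h
  have h1 : E - C m ≤ E - C' m := (key (E - C m)).mp le_rfl
  have h2 : E - C' m ≤ E - C m := (key (E - C' m)).mpr le_rfl
  linarith
end
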